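/- arXiv:1507.00334 — 6 statements merged into one kernel-verified Lean document; each statement's English description precedes it below -/
import Mathlib

section
/- Let G be a group, H a subgroup of G, and M a subset of G that is a sharply transitive section for H, i.e., for all a, b ∈ G there is exactly one m ∈ M with m·aH = bH. Then for every g ∈ G and every x ∈ G, the left coset x·(g⁻¹Hg) of the conjugate subgroup g⁻¹Hg contains at most one element of M. -/
theorem QuotientGroup.mk_mul_conj_mul_inv {G : Type*} [Group G] {H : Subgroup G} {h : G}
    (hh : h ∈ H) (x g : G) : (x * (g⁻¹ * h * g) * g⁻¹ : G ⧸ H) = (x * g⁻¹ : G) := by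
  rw [show x * (g⁻¹ * h * g) * g⁻¹ = x * g⁻¹ * h by group]
  exact QuotientGroup.mk_mul_of_mem _ hh

/-- If `M ⊆ G` is a sharply transitive section for the subgroup `H`,
then for every `g, x ∈ G` the left coset `x·(g⁻¹Hg)` of the conjugate subgroup
`g⁻¹Hg` contains at most one element of `M`. -/
theorem stmt2 (G : Type*) [Group G] (H : Subgroup G) (M : Set G)
    (hM : ∀ a b : G, ∃! m : G, m ∈ M ∧
      (QuotientGroup.mk (m * a) : G ⧸ H) = (QuotientGroup.mk b : G ⧸ H)) :
    ∀ g x m₁ m₂ : G, m₁ ∈ M → m₂ ∈ M →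
      (∃ h ∈ H, m₁ = x * (g⁻¹ * h * g)) → (∃ h ∈ H, m₂ = x * (g⁻¹ * h * g)) →
      m₁ = m₂ := by
  rintro g x m₁ m₂ hm₁ hm₂ ⟨h₁, hh₁, rfl⟩ ⟨h₂, hh₂, rfl⟩
  exact (hM g⁻¹ (x * g⁻¹)).unique
    ⟨hm₁, QuotientGroup.mk_mul_conj_mul_inv hh₁ x g⟩
    ⟨hm₂, QuotientGroup.mk_mul_conj_mul_inv hh₂ x g⟩
end

section
/- Let h = span_ℝ{U, iT, iK} ⊆ sl₂(ℂ). If m is a real linear subspace of sl₂(ℂ) with sl₂(ℂ) = h ⊕ m as real vector spaces and [h, m] ⊆ m, then there exists a ∈ ℝ such that m = span_ℝ{T + a·iT, iU − a·U, K + a·iK}. -/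
/-!
Write `T - p₁`, `iU - p₂`, `K - p₃ ∈ m` with `pᵢ ∈ h`. For `x ∈ h`, `ad x` preserves `m`
and maps the `pᵢ` into `h`, so by uniqueness of the decomposition `h ⊕ m` the `h`-component
of `⁅x, w⁆` is `⁅x, h-component of w⁆`. Applied to `⁅U, T⁆ = 2K`, `⁅U, iU⁆ = 0`,
`⁅iT, T⁆ = 0` and `⁅iT, iU⁆ = 2K`, this gives linear equations on the coordinates of the `pᵢ`
whose solutions are `p₁ = -a • iT`, `p₂ = a • U`, `p₃ = -a • iK`, i.e. `m_a ≤ m`. Since `m_a`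
together with `h` still spans `sl₂(ℂ)`, modularity of the submodule lattice gives `m = m_a`.
-/

namespace Stmt9

abbrev M2C := Matrix (Fin 2) (Fin 2) ℂ

def K : M2C := !![1, 0; 0, -1]
def T : M2C := !![0, 1; 1, 0]
def U : M2C := !![0, 1; -1, 0]

/-- `sl₂(ℂ)` as a 6-dimensional real Lie algebra: the real span of
`K, T, U, iK, iT, iU` inside the 2×2 complex matrices (commutator bracket). -/
noncomputable def sl2c : Submodule ℝ M2C :=
  Submodule.span ℝ {K, T, U, Complex.I • K, Complex.I • T, Complex.I • U}

/-- `h = span_ℝ{U, iT, iK}`. -/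
noncomputable def hsu : Submodule ℝ M2C :=
  Submodule.span ℝ {U, Complex.I • T, Complex.I • K}

/-- `m_a = span_ℝ{T + a·iT, iU − a·U, K + a·iK}`. -/
noncomputable def ma (a : ℝ) : Submodule ℝ M2C :=
  Submodule.span ℝ
    {T + a • Complex.I • T, Complex.I • U - a • U, K + a • Complex.I • K}

theorem lie_eq_of_sub_mem_of_disjoint {R A : Type*} [Ring R] [Ring A] [Module R A]
    {h m : Submodule R A} (hd : Disjoint h m) (hbr : ∀ x ∈ h, ∀ y ∈ m, ⁅x, y⁆ ∈ m)
    {x w p q : A} (hx : x ∈ h) (hxp : ⁅x, p⁆ ∈ h) (hq : q ∈ h) (hwp : w - p ∈ m)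
    (hxw : ⁅x, w⁆ - q ∈ m) : ⁅x, p⁆ = q := by
  have hm : ⁅x, p⁆ - q ∈ m := by
    convert m.sub_mem hxw (hbr x hx _ hwp) using 1
    simp only [Ring.lie_def, mul_sub, sub_mul]
    abel
  exact sub_eq_zero.mp ((Submodule.disjoint_def.mp hd) _ (h.sub_mem hxp hq) hm)

open Complex (I)

noncomputable def hsuVec (u t k : ℝ) : M2C := u • U + t • (I • T) + k • (I • K)

theorem hsuVec_mem (u t k : ℝ) : hsuVec u t k ∈ hsu :=
  hsu.add_mem (hsu.add_mem (hsu.smul_mem _ (Submodule.subset_span (by simp)))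
    (hsu.smul_mem _ (Submodule.subset_span (by simp))))
    (hsu.smul_mem _ (Submodule.subset_span (by simp)))

theorem exists_hsuVec_eq {x : M2C} (hx : x ∈ hsu) : ∃ u t k : ℝ, hsuVec u t k = x := by
  simp only [hsu, Submodule.mem_span_insert, Submodule.mem_span_singleton] at hx
  obtain ⟨u, y, ⟨t, z, ⟨k, rfl⟩, rfl⟩, rfl⟩ := hx
  exact ⟨u, t, k, by rw [hsuVec]; abel⟩

theorem hsuVec_eq_matrix (u t k : ℝ) :
    hsuVec u t k = !![⟨0, k⟩, ⟨u, t⟩; ⟨-u, t⟩, ⟨0, -k⟩] := by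
  ext i j
  fin_cases i <;> fin_cases j <;> simp [hsuVec, U, T, K, Complex.ext_iff]

theorem hsuVec_inj {u t k u' t' k' : ℝ} :
    hsuVec u t k = hsuVec u' t' k' ↔ u = u' ∧ t = t' ∧ k = k' := by
  refine ⟨fun h ↦ ?_, by rintro ⟨rfl, rfl, rfl⟩; rfl⟩
  have h00 := congrFun₂ h 0 0
  have h01 := congrFun₂ h 0 1
  simp only [hsuVec_eq_matrix, Matrix.of_apply, Matrix.cons_val', Matrix.cons_val_zero,
    Matrix.cons_val_one, Matrix.empty_val', Matrix.cons_val_fin_one, Complex.mk.injEq] at h00 h01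
  exact ⟨h01.1, h01.2, h00.2⟩

theorem hsuVec_zero : hsuVec 0 0 0 = 0 := by simp [hsuVec]

theorem smul_hsuVec (c u t k : ℝ) : c • hsuVec u t k = hsuVec (c * u) (c * t) (c * k) := by
  simp only [hsuVec, smul_add, smul_smul]

theorem lie_U_hsuVec (u t k : ℝ) : ⁅U, hsuVec u t k⁆ = hsuVec 0 (-2 * k) (2 * t) := by
  rw [hsuVec_eq_matrix, hsuVec_eq_matrix, Ring.lie_def, U]
  ext i j
  fin_cases i <;> fin_cases j <;> simp [Complex.ext_iff] <;> ring

theorem lie_iT_hsuVec (u t k : ℝ) : ⁅I • T, hsuVec u t k⁆ = hsuVec (2 * k) 0 (-2 * u) := by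
  rw [hsuVec_eq_matrix, hsuVec_eq_matrix, Ring.lie_def, T]
  ext i j
  fin_cases i <;> fin_cases j <;> simp [Complex.ext_iff] <;> ring

theorem lie_U_T : ⁅U, T⁆ = (2 : ℝ) • K := by
  ext i j
  fin_cases i <;> fin_cases j <;> simp [Ring.lie_def, U, T, K] <;> norm_num

theorem lie_U_iU : ⁅U, I • U⁆ = 0 := by
  rw [Ring.lie_def, mul_smul_comm, smul_mul_assoc, sub_self]

theorem lie_iT_T : ⁅I • T, T⁆ = 0 := by
  rw [Ring.lie_def, mul_smul_comm, smul_mul_assoc, sub_self]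

theorem lie_iT_iU : ⁅I • T, I • U⁆ = (2 : ℝ) • K := by
  ext i j
  fin_cases i <;> fin_cases j <;> simp [Ring.lie_def, U, T, K] <;> norm_num

theorem exists_sub_hsuVec_mem {m : Submodule ℝ M2C} (hsup : hsu ⊔ m = sl2c) (w : M2C)
    (hw : w ∈ sl2c) : ∃ u t k : ℝ, w - hsuVec u t k ∈ m := by
  rw [← hsup, Submodule.mem_sup] at hw
  obtain ⟨y, hy, z, hz, rfl⟩ := hw
  obtain ⟨u, t, k, rfl⟩ := exists_hsuVec_eq hy
  exact ⟨u, t, k, by rwa [add_sub_cancel_left]⟩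

theorem exists_ma_le {m : Submodule ℝ M2C} (hsup : hsu ⊔ m = sl2c) (hinf : hsu ⊓ m = ⊥)
    (hbr : ∀ x ∈ hsu, ∀ y ∈ m, ⁅x, y⁆ ∈ m) : ∃ a : ℝ, ma a ≤ m := by
  have hd : Disjoint hsu m := disjoint_iff.mpr hinf
  have hU : U ∈ hsu := Submodule.subset_span (by simp)
  have hiT : I • T ∈ hsu := Submodule.subset_span (by simp)
  obtain ⟨u₁, t₁, k₁, hT⟩ := exists_sub_hsuVec_mem hsup T (Submodule.subset_span (by simp))
  obtain ⟨u₂, t₂, k₂, hiU⟩ := exists_sub_hsuVec_mem hsup (I • U) (Submodule.subset_span (by simp))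
  obtain ⟨u₃, t₃, k₃, hK⟩ := exists_sub_hsuVec_mem hsup K (Submodule.subset_span (by simp))
  have hUp (u t k : ℝ) : ⁅U, hsuVec u t k⁆ ∈ hsu := by
    rw [lie_U_hsuVec]; exact hsuVec_mem _ _ _
  have hiTp (u t k : ℝ) : ⁅I • T, hsuVec u t k⁆ ∈ hsu := by
    rw [lie_iT_hsuVec]; exact hsuVec_mem _ _ _
  have h2K : (2 : ℝ) • K - (2 : ℝ) • hsuVec u₃ t₃ k₃ ∈ m := by
    rw [← smul_sub]; exact m.smul_mem _ hK
  have h2p : (2 : ℝ) • hsuVec u₃ t₃ k₃ ∈ hsu := hsu.smul_mem _ (hsuVec_mem _ _ _)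
  have e₁ : ⁅U, hsuVec u₁ t₁ k₁⁆ = (2 : ℝ) • hsuVec u₃ t₃ k₃ :=
    lie_eq_of_sub_mem_of_disjoint hd hbr hU (hUp _ _ _) h2p hT (by rwa [lie_U_T])
  have e₂ : ⁅U, hsuVec u₂ t₂ k₂⁆ = 0 :=
    lie_eq_of_sub_mem_of_disjoint hd hbr hU (hUp _ _ _) hsu.zero_mem hiU
      (by rw [lie_U_iU, sub_zero]; exact m.zero_mem)
  have e₃ : ⁅I • T, hsuVec u₁ t₁ k₁⁆ = 0 :=
    lie_eq_of_sub_mem_of_disjoint hd hbr hiT (hiTp _ _ _) hsu.zero_mem hT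
      (by rw [lie_iT_T, sub_zero]; exact m.zero_mem)
  have e₄ : ⁅I • T, hsuVec u₂ t₂ k₂⁆ = (2 : ℝ) • hsuVec u₃ t₃ k₃ :=
    lie_eq_of_sub_mem_of_disjoint hd hbr hiT (hiTp _ _ _) h2p hiU (by rwa [lie_iT_iU])
  simp only [lie_U_hsuVec, lie_iT_hsuVec, smul_hsuVec, ← hsuVec_zero, hsuVec_inj] at e₁ e₂ e₃ e₄
  obtain ⟨hu₁, hk₁⟩ : u₁ = 0 ∧ k₁ = 0 := ⟨by linarith, by linarith⟩
  obtain ⟨ht₂, hk₂⟩ : t₂ = 0 ∧ k₂ = 0 := ⟨by linarith, by linarith⟩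
  obtain ⟨hu₃, ht₃, hk₃⟩ : u₃ = 0 ∧ t₃ = 0 ∧ k₃ = t₁ := ⟨by linarith, by linarith, by linarith⟩
  have hu₂ : u₂ = -t₁ := by linarith
  refine ⟨-t₁, ?_⟩
  rw [ma, Submodule.span_le]
  rintro w (rfl | rfl | rfl) <;> rw [SetLike.mem_coe]
  · convert hT using 1
    rw [hsuVec, hu₁, hk₁]; module
  · convert hiU using 1
    rw [hsuVec, hu₂, ht₂, hk₂]; module
  · convert hK using 1
    rw [hsuVec, hu₃, ht₃, hk₃]; module

theorem sl2c_le_hsu_sup_ma (a : ℝ) : sl2c ≤ hsu ⊔ ma a := by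
  have hh (x : M2C) (hx : x ∈ ({U, I • T, I • K} : Set M2C)) : x ∈ hsu ⊔ ma a :=
    Submodule.mem_sup_left (Submodule.subset_span hx)
  have hm (x : M2C) (hx : x ∈ ({T + a • I • T, I • U - a • U, K + a • I • K} : Set M2C)) :
      x ∈ hsu ⊔ ma a :=
    Submodule.mem_sup_right (Submodule.subset_span hx)
  rw [sl2c, Submodule.span_le]
  rintro w (rfl | rfl | rfl | rfl | rfl | rfl) <;> rw [SetLike.mem_coe]
  · simpa using Submodule.sub_mem _ (hm (K + a • I • K) (by simp))
      (Submodule.smul_mem _ a (hh (I • K) (by simp)))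
  · simpa using Submodule.sub_mem _ (hm (T + a • I • T) (by simp))
      (Submodule.smul_mem _ a (hh (I • T) (by simp)))
  · exact hh U (by simp)
  · exact hh (I • K) (by simp)
  · exact hh (I • T) (by simp)
  · simpa using Submodule.add_mem _ (hm (I • U - a • U) (by simp))
      (Submodule.smul_mem _ a (hh U (by simp)))

theorem stmt9_general (m : Submodule ℝ M2C)
    (hsup : hsu ⊔ m = sl2c) (hinf : hsu ⊓ m = ⊥)
    (hbr : ∀ x ∈ hsu, ∀ y ∈ m, ⁅x, y⁆ ∈ m) :
    ∃ a : ℝ, m = ma a := by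
  obtain ⟨a, ha⟩ := exists_ma_le hsup hinf hbr
  refine ⟨a, (eq_of_le_of_inf_le_of_sup_le (z := hsu) ha ?_ ?_).symm⟩
  · rw [inf_comm, hinf]; exact bot_le
  · rw [sup_comm, hsup, sup_comm]; exact sl2c_le_hsu_sup_ma a

/-- every real subspace `m` of `sl₂(ℂ)` with `sl₂(ℂ) = h ⊕ m`
(as real vector spaces) and `[h, m] ⊆ m` equals `m_a` for some `a ∈ ℝ`. -/
theorem stmt9 (m : Submodule ℝ M2C) (hle : m ≤ sl2c)
    (hsup : hsu ⊔ m = sl2c) (hinf : hsu ⊓ m = ⊥)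
    (hbr : ∀ x ∈ hsu, ∀ y ∈ m, ⁅x, y⁆ ∈ m) :
    ∃ a : ℝ, m = ma a :=
  stmt9_general m hsup hinf hbr

end Stmt9
end

section
/- The map φ : sl₂(ℂ) → sl₂(ℂ) sending a matrix X to its entrywise complex conjugate X̄ is an automorphism of sl₂(ℂ) as a real Lie algebra; it maps h = span_ℝ{U, iT, iK} onto itself, and for every a ∈ ℝ it maps m_a = span_ℝ{T + a·iT, iU − a·U, K + a·iK} onto m_{−a}. -/
namespace Stmt11

abbrev M2C := Matrix (Fin 2) (Fin 2) ℂ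

def K : M2C := !![1, 0; 0, -1]
def T : M2C := !![0, 1; 1, 0]
def U : M2C := !![0, 1; -1, 0]

/-- `sl₂(ℂ)` as a 6-dimensional real Lie algebra: the real span of
`K, T, U, iK, iT, iU`. -/
noncomputable def sl2c : Submodule ℝ M2C :=
  Submodule.span ℝ {K, T, U, Complex.I • K, Complex.I • T, Complex.I • U}

/-- `h = span_ℝ{U, iT, iK}`. -/
noncomputable def hsu : Submodule ℝ M2C :=
  Submodule.span ℝ {U, Complex.I • T, Complex.I • K}

/-- `m_a = span_ℝ{T + a·iT, iU − a·U, K + a·iK}`. -/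
noncomputable def ma (a : ℝ) : Submodule ℝ M2C :=
  Submodule.span ℝ
    {T + a • Complex.I • T, Complex.I • U - a • U, K + a • Complex.I • K}

/-- Entrywise complex conjugation of 2×2 complex matrices, as a real-algebra
automorphism. -/
noncomputable def phi : M2C ≃ₐ[ℝ] M2C := AlgEquiv.mapMatrix Complex.conjAe

end Stmt11

/-! Conjugation fixes the real matrices `K, T, U` and negates `iK, iT, iU`, so it carries each of
the spanning sets of `sl₂(ℂ)`, `h` and `m_a` onto the spanning set of the target up to the signs
of its members, and a span does not see such signs. -/

namespace Submodule

variable {R M : Type*} [Ring R] [AddCommGroup M] [Module R M]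

theorem span_le_span_of_forall_mem_or_neg_mem {s t : Set M}
    (h : ∀ x ∈ s, x ∈ t ∨ -x ∈ t) : span R s ≤ span R t := by
  refine span_le.mpr fun x hx => ?_
  rcases h x hx with hxt | hxt
  · exact subset_span hxt
  · exact neg_mem_iff.mp (subset_span hxt)

theorem span_eq_span_of_forall_mem_or_neg_mem {s t : Set M}
    (hs : ∀ x ∈ s, x ∈ t ∨ -x ∈ t) (ht : ∀ y ∈ t, y ∈ s ∨ -y ∈ s) :
    span R s = span R t :=
  le_antisymm (span_le_span_of_forall_mem_or_neg_mem hs)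
    (span_le_span_of_forall_mem_or_neg_mem ht)

end Submodule

namespace Stmt11

open Complex ComplexConjugate

lemma phi_apply (x : M2C) (i j : Fin 2) : phi x i j = conj (x i j) := by
  simp [phi]

lemma phi_K : phi K = K := by
  ext i j; rw [phi_apply]; fin_cases i <;> fin_cases j <;> simp [K]

lemma phi_T : phi T = T := by
  ext i j; rw [phi_apply]; fin_cases i <;> fin_cases j <;> simp [T]

lemma phi_U : phi U = U := by
  ext i j; rw [phi_apply]; fin_cases i <;> fin_cases j <;> simp [U]

lemma phi_I_smul (X : M2C) : phi (I • X) = -(I • phi X) := by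
  ext i j; simp [phi_apply]

lemma phi_lie (x y : M2C) : phi ⁅x, y⁆ = ⁅phi x, phi y⁆ := by
  simp only [Ring.lie_def, map_sub, map_mul]

/-- entrywise conjugation `X ↦ X̄` is a real Lie algebra
automorphism of `sl₂(ℂ)` mapping `h` onto itself and `m_a` onto `m_{−a}`. -/
theorem stmt11 :
    (∀ (x : M2C) (i j : Fin 2), phi x i j = (starRingEnd ℂ) (x i j)) ∧
    Function.Bijective phi ∧
    (∀ x y : M2C, phi ⁅x, y⁆ = ⁅phi x, phi y⁆) ∧
    Submodule.map phi.toLinearMap sl2c = sl2c ∧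
    Submodule.map phi.toLinearMap hsu = hsu ∧
    (∀ a : ℝ, Submodule.map phi.toLinearMap (ma a) = ma (-a)) := by
  refine ⟨phi_apply, phi.bijective, phi_lie, ?_, ?_, fun a => ?_⟩
  all_goals
    simp only [sl2c, hsu, ma, Submodule.map_span, Set.image_insert_eq, Set.image_singleton,
      AlgEquiv.toLinearMap_apply, map_add, map_sub, map_smul, phi_I_smul, phi_K, phi_T, phi_U,
      smul_neg, neg_smul, sub_neg_eq_add, ← neg_add', ← sub_eq_add_neg]
    apply Submodule.span_eq_span_of_forall_mem_or_neg_mem <;>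
      simp only [Set.mem_insert_iff, Set.mem_singleton_iff, forall_eq_or_imp, forall_eq,
        neg_neg, true_or, or_true, and_self]

end Stmt11
end

section
/- Let g = sl₂(ℝ) × ℝ with bracket [(X,s),(Y,t)] = ([X,Y], 0), let h = span{(K,1)}, and for a ∈ ℝ with a ≠ −1 let m_a = span{(U,0), (T,0), (aK, 1+a)}. Then for every a ∈ ℝ with a ≠ −1 there exist g₀ ∈ SL₂(ℝ) and a nonzero element (X, t) ∈ m_a such that (g₀ X g₀⁻¹, t) ∈ h. -/
/-! The element `X = a U + (1 + a) T + a K = !![a, 1 + 2a; 1, -a]`, paired with `t = 1 + a`, lies in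
`m_a`. It is traceless with `det X = -(1 + a)²`, so for `a ≠ -1` it has the distinct eigenvalues
`±(1 + a)`, and a matrix whose rows are left eigenvectors conjugates it to `(1 + a) K`. -/

namespace Stmt13

abbrev M2 := Matrix (Fin 2) (Fin 2) ℝ

/-- `g = sl₂(ℝ) × ℝ`, realized inside the product ring `M₂(ℝ) × ℝ`, whose
commutator bracket is `[(X,s), (Y,t)] = ([X,Y], 0)`. -/
abbrev g12 := M2 × ℝ

def K : M2 := !![1, 0; 0, -1]
def T : M2 := !![0, 1; 1, 0]
def U : M2 := !![0, 1; -1, 0]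

/-- `h = span{(K, 1)}`. -/
def h1 : Submodule ℝ g12 := Submodule.span ℝ {(K, (1:ℝ))}

/-- `m_a = span{(U,0), (T,0), (aK, 1+a)}`. -/
noncomputable def m1 (a : ℝ) : Submodule ℝ g12 :=
  Submodule.span ℝ {(U, (0:ℝ)), (T, (0:ℝ)), (a • K, 1 + a)}

theorem SpecialLinearGroup.conj_eq_iff_mul_eq {n R : Type*} [Fintype n] [DecidableEq n]
    [CommRing R] (g : Matrix.SpecialLinearGroup n R) (X Y : Matrix n n R) :
    (g : Matrix n n R) * X * (g : Matrix n n R)⁻¹ = Y ↔ (g : Matrix n n R) * X = Y * g := by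
  have : Invertible (g : Matrix n n R) := (g : Matrix n n R).invertibleOfIsUnitDet (by simp)
  exact Matrix.mul_inv_eq_iff_eq_mul_of_invertible _ _ _

theorem exists_conj_eq_smul_K {α β γ l : ℝ} (hγ : γ ≠ 0) (hl : l ≠ 0)
    (hdet : α ^ 2 + β * γ = l ^ 2) :
    ∃ g : Matrix.SpecialLinearGroup (Fin 2) ℝ,
      (g : M2) * !![α, β; γ, -α] * (g : M2)⁻¹ = l • K := by
  -- the rows of `g` are left eigenvectors `(γ, ±l - α)`, the first rescaled to make `det g = 1`
  set c : ℝ := -1 / (2 * l * γ)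
  have hc : c * (2 * l * γ) = -1 := div_mul_cancel₀ _ (by positivity)
  clear_value c
  have hg : (!![c * γ, c * (l - α); γ, -l - α] : M2).det = 1 := by
    rw [Matrix.det_fin_two_of]; linear_combination -hc
  refine ⟨⟨_, hg⟩, (SpecialLinearGroup.conj_eq_iff_mul_eq _ _ _).2 ?_⟩
  ext i j
  fin_cases i <;> fin_cases j <;> simp [K, Matrix.mul_apply, Fin.sum_univ_two]
  · ring
  · linear_combination c * hdet
  · ring
  · linear_combination hdet

theorem smul_K_mem_h1 (c : ℝ) : (c • K, c) ∈ h1 := by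
  simpa using Submodule.smul_mem h1 c (Submodule.mem_span_singleton_self ((K, (1 : ℝ)) : g12))

theorem mem_m1 (a : ℝ) : ((!![a, 1 + 2 * a; 1, -a] : M2), 1 + a) ∈ m1 a := by
  have hU : ((U, (0 : ℝ)) : g12) ∈ m1 a := Submodule.subset_span (by simp)
  have hT : ((T, (0 : ℝ)) : g12) ∈ m1 a := Submodule.subset_span (by simp)
  have hK : ((a • K, 1 + a) : g12) ∈ m1 a := Submodule.subset_span (by simp)
  convert (m1 a).add_mem ((m1 a).add_mem ((m1 a).smul_mem a hU) ((m1 a).smul_mem (1 + a) hT)) hK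
    using 1
  refine Prod.ext ?_ (by simp)
  ext i j
  fin_cases i <;> fin_cases j <;> simp [U, T, K]; ring

/-- for every `a ≠ −1` there are `g₀ ∈ SL₂(ℝ)` and a nonzero
`(X, t) ∈ m_a` with `(g₀ X g₀⁻¹, t) ∈ h`. -/
theorem stmt13 :
    ∀ a : ℝ, a ≠ -1 →
      ∃ (g0 : Matrix.SpecialLinearGroup (Fin 2) ℝ) (X : M2) (t : ℝ),
        (X, t) ∈ m1 a ∧ (X, t) ≠ (0 : g12) ∧
        ((g0 : M2) * X * (g0 : M2)⁻¹, t) ∈ h1 := by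
  intro a ha
  have hl : 1 + a ≠ 0 := fun h => ha (by linarith)
  obtain ⟨g0, hg0⟩ := exists_conj_eq_smul_K (α := a) (β := 1 + 2 * a) one_ne_zero hl (by ring)
  refine ⟨g0, _, _, mem_m1 a, fun h => hl (congrArg Prod.snd h), ?_⟩
  rw [hg0]
  exact smul_K_mem_h1 _

end Stmt13
end

section
/- Let g be the 5-dimensional real Lie subalgebra of the 3×3 real matrices spanned by K' = E₂₂ − E₃₃, T' = E₂₃ + E₃₂, U' = E₂₃ − E₃₂, e₁ = E₁₂, e₂ = E₁₃, and let h = span{K', e₁}. Then h is a 2-dimensional subalgebra of g containing no nonzero ideal of g, and the subspace m = span{e₂, T', U'} satisfies: g = h ⊕ m as vector spaces, [h, m] ⊆ m, and m generates g as a Lie algebra. Moreover, m is the unique linear subspace of g with g = h ⊕ m and [h, m] ⊆ m. -/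
/-!
All three subspaces are cut out of the 3×3 matrices by linear equations on the entries, so the
closure properties are polynomial identities in the entries. `m` generates `g` because
`[T', U'] = -2K'` and `[U', e₂] = e₁`, and an ideal inside `h` is trivial because
`[T', aK' + be₁] = -2aU' - be₂` lies in `h` only when `a = b = 0`.

For uniqueness, `ad K'` acts diagonally on `g` with eigenvalues `0, -1, 1, ±2` on
`K', e₁, e₂, T' ± U'`. A complement `m'` of `h` stable under `ad K'` contains the eigencomponents
of its elements; those for the eigenvalues `0` and `-1` lie in `h ∩ m' = 0`, so `m' ⊆ m`, and
then `h ⊕ m' = h ⊕ m` forces `m' = m`.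
-/

namespace Stmt14

attribute [local instance] LieRing.ofAssociativeRing

abbrev M3 := Matrix (Fin 3) (Fin 3) ℝ

def K' : M3 := !![0, 0, 0; 0, 1, 0; 0, 0, -1]
def T' : M3 := !![0, 0, 0; 0, 0, 1; 0, 1, 0]
def U' : M3 := !![0, 0, 0; 0, 0, 1; 0, -1, 0]
def e1 : M3 := !![0, 1, 0; 0, 0, 0; 0, 0, 0]
def e2 : M3 := !![0, 0, 1; 0, 0, 0; 0, 0, 0]

/-- `g = span{K', T', U', e₁, e₂} ≅ sl₂(ℝ) ⋉ ℝ²` inside the 3×3 matrices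
(commutator bracket). -/
def g14 : Submodule ℝ M3 := Submodule.span ℝ {K', T', U', e1, e2}

/-- `h = span{K', e₁}`. -/
def h14 : Submodule ℝ M3 := Submodule.span ℝ {K', e1}

/-- `m = span{e₂, T', U'}`. -/
def m14 : Submodule ℝ M3 := Submodule.span ℝ {e2, T', U'}

lemma eq_zero_of_smul_mem_of_inf_eq_bot {R M : Type*} [Semiring R] [IsCancelMulZero R]
    [AddCommMonoid M] [Module R M] [Module.IsTorsionFree R M] {p q : Submodule R M}
    (hpq : p ⊓ q = ⊥) {a : R} {x : M} (hx : x ∈ p) (hx0 : x ≠ 0) (hax : a • x ∈ q) : a = 0 :=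
  have hdisj := Submodule.disjoint_def.1 (disjoint_iff.2 hpq)
  (smul_eq_zero.1 (hdisj _ (p.smul_mem a hx) hax)).resolve_right hx0

lemma mem_g14_iff {x : M3} :
    x ∈ g14 ↔ x 0 0 = 0 ∧ x 1 0 = 0 ∧ x 2 0 = 0 ∧ x 2 2 = -x 1 1 := by
  have hrange : Set.range ![K', T', U', e1, e2] = {K', T', U', e1, e2} := by
    simp only [Matrix.range_cons, Matrix.range_empty, Set.union_empty, Set.singleton_union]
  rw [g14, ← hrange, Submodule.mem_span_range_iff_exists_fun]
  constructor
  · rintro ⟨c, rfl⟩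
    simp [Fin.sum_univ_five, K', T', U', e1, e2]
  · rintro ⟨h00, h10, h20, h22⟩
    refine ⟨![x 1 1, (x 1 2 + x 2 1) / 2, (x 1 2 - x 2 1) / 2, x 0 1, x 0 2], ?_⟩
    ext i j
    fin_cases i <;> fin_cases j <;> simp [Fin.sum_univ_five, K', T', U', e1, e2, *] <;> ring

lemma mem_h14_iff {x : M3} :
    x ∈ h14 ↔ x 0 0 = 0 ∧ x 0 2 = 0 ∧ x 1 0 = 0 ∧ x 1 2 = 0 ∧ x 2 0 = 0 ∧ x 2 1 = 0 ∧
      x 2 2 = -x 1 1 := by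
  rw [h14, Submodule.mem_span_pair]
  constructor
  · rintro ⟨a, b, rfl⟩
    simp [K', e1]
  · rintro ⟨h00, h02, h10, h12, h20, h21, h22⟩
    refine ⟨x 1 1, x 0 1, ?_⟩
    ext i j
    fin_cases i <;> fin_cases j <;> simp [K', e1, *]

lemma mem_m14_iff {x : M3} :
    x ∈ m14 ↔ x 0 0 = 0 ∧ x 0 1 = 0 ∧ x 1 0 = 0 ∧ x 1 1 = 0 ∧ x 2 0 = 0 ∧ x 2 2 = 0 := by
  have hrange : Set.range ![e2, T', U'] = {e2, T', U'} := by
    simp only [Matrix.range_cons, Matrix.range_empty, Set.union_empty, Set.singleton_union]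
  rw [m14, ← hrange, Submodule.mem_span_range_iff_exists_fun]
  constructor
  · rintro ⟨c, rfl⟩
    simp [Fin.sum_univ_three, T', U', e2]
  · rintro ⟨h00, h01, h10, h11, h20, h22⟩
    refine ⟨![x 0 2, (x 1 2 + x 2 1) / 2, (x 1 2 - x 2 1) / 2], ?_⟩
    ext i j
    fin_cases i <;> fin_cases j <;> simp [Fin.sum_univ_three, T', U', e2, *] <;> ring

lemma K'_mem_h14 : K' ∈ h14 := Submodule.subset_span (by simp)

lemma e1_mem_h14 : e1 ∈ h14 := Submodule.subset_span (by simp)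

lemma T'_mem_g14 : T' ∈ g14 := Submodule.subset_span (by simp)

lemma K'_ne_zero : K' ≠ 0 := fun h => by simpa [K'] using congrFun (congrFun h 1) 1

lemma e1_ne_zero : e1 ≠ 0 := fun h => by simpa [e1] using congrFun (congrFun h 0) 1

lemma finrank_h14 : Module.finrank ℝ h14 = 2 := by
  have hli : LinearIndependent ℝ ![K', e1] := by
    refine LinearIndependent.pair_iff.2 fun s t hst => ⟨?_, ?_⟩
    · simpa [K', e1] using congrFun (congrFun hst 1) 1
    · simpa [K', e1] using congrFun (congrFun hst 0) 1
  have hrange : Set.range ![K', e1] = {K', e1} := by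
    simp only [Matrix.range_cons, Matrix.range_empty, Set.union_empty, Set.singleton_union]
  rw [h14, ← hrange, finrank_span_eq_card hli, Fintype.card_fin]

lemma h14_sup_m14 : h14 ⊔ m14 = g14 := by
  rw [h14, m14, g14, ← Submodule.span_union]
  congr 1
  ext x
  simp only [Set.mem_union, Set.mem_insert_iff, Set.mem_singleton_iff]
  tauto

lemma h14_inf_m14 : h14 ⊓ m14 = ⊥ := by
  refine (Submodule.eq_bot_iff _).2 fun x ⟨hh, hm⟩ => ?_
  obtain ⟨h00, h02, h10, h12, h20, h21, h22⟩ := mem_h14_iff.1 hh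
  obtain ⟨-, h01, -, h11, -, -⟩ := mem_m14_iff.1 hm
  ext i j
  fin_cases i <;> fin_cases j <;> simp [*]

lemma lie_mem_g14 {x y : M3} (hx : x ∈ g14) (hy : y ∈ g14) : ⁅x, y⁆ ∈ g14 := by
  obtain ⟨a1, a2, a3, a4⟩ := mem_g14_iff.1 hx
  obtain ⟨b1, b2, b3, b4⟩ := mem_g14_iff.1 hy
  refine mem_g14_iff.2 ⟨?_, ?_, ?_, ?_⟩ <;>
    simp only [Ring.lie_def, Matrix.sub_apply, Matrix.mul_apply, Fin.sum_univ_three, *] <;> ring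

lemma lie_mem_h14 {x y : M3} (hx : x ∈ h14) (hy : y ∈ h14) : ⁅x, y⁆ ∈ h14 := by
  obtain ⟨a1, a2, a3, a4, a5, a6, a7⟩ := mem_h14_iff.1 hx
  obtain ⟨b1, b2, b3, b4, b5, b6, b7⟩ := mem_h14_iff.1 hy
  refine mem_h14_iff.2 ⟨?_, ?_, ?_, ?_, ?_, ?_, ?_⟩ <;>
    simp only [Ring.lie_def, Matrix.sub_apply, Matrix.mul_apply, Fin.sum_univ_three, *] <;> ring

lemma lie_mem_m14_of_mem_h14 {x y : M3} (hx : x ∈ h14) (hy : y ∈ m14) : ⁅x, y⁆ ∈ m14 := by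
  obtain ⟨a1, a2, a3, a4, a5, a6, a7⟩ := mem_h14_iff.1 hx
  obtain ⟨b1, b2, b3, b4, b5, b6⟩ := mem_m14_iff.1 hy
  refine mem_m14_iff.2 ⟨?_, ?_, ?_, ?_, ?_, ?_⟩ <;>
    simp only [Ring.lie_def, Matrix.sub_apply, Matrix.mul_apply, Fin.sum_univ_three, *] <;> ring

lemma eq_zero_of_mem_h14_of_lie_T'_mem_h14 {y : M3} (hy : y ∈ h14) (hTy : ⁅T', y⁆ ∈ h14) :
    y = 0 := by
  obtain ⟨h00, h02, h10, h12, h20, h21, h22⟩ := mem_h14_iff.1 hy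
  obtain ⟨-, hT02, -, hT12, -, -, -⟩ := mem_h14_iff.1 hTy
  simp [T', Ring.lie_def, Matrix.mul_apply, Matrix.vecMul, dotProduct, Fin.sum_univ_three, *]
    at hT02 hT12
  ext i j
  fin_cases i <;> fin_cases j <;> simp [*] <;> linarith

lemma lie_T'_U' : ⁅T', U'⁆ = (-2 : ℝ) • K' := by
  ext i j
  fin_cases i <;> fin_cases j <;> norm_num [T', U', K', Ring.lie_def]

lemma lie_U'_e2 : ⁅U', e2⁆ = e1 := by
  ext i j
  fin_cases i <;> fin_cases j <;> simp [U', e1, e2, Ring.lie_def]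

lemma lieSpan_m14 : (LieSubalgebra.lieSpan ℝ M3 (m14 : Set M3)).toSubmodule = g14 := by
  have hm14 : m14 ≤ g14 := h14_sup_m14 ▸ le_sup_right
  refine le_antisymm ?_ ?_
  · have hg14 : (LieSubalgebra.lieSpan ℝ M3 (g14 : Set M3)).toSubmodule = g14 :=
      LieSubalgebra.coe_lieSpan_submodule_eq_iff.2
        (g14.exists_lieSubalgebra_coe_eq_iff.2 fun _ _ => lie_mem_g14)
    exact hg14 ▸ LieSubalgebra.lieSpan_mono hm14
  · set L := LieSubalgebra.lieSpan ℝ M3 (m14 : Set M3)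
    have hm : ∀ x ∈ m14, x ∈ L := fun x hx => LieSubalgebra.subset_lieSpan hx
    have hT : T' ∈ L := hm _ (Submodule.subset_span (by simp))
    have hU : U' ∈ L := hm _ (Submodule.subset_span (by simp))
    have he2 : e2 ∈ L := hm _ (Submodule.subset_span (by simp))
    have hK : K' ∈ L := by
      have : (-2 : ℝ)⁻¹ • ⁅T', U'⁆ ∈ L := L.smul_mem _ (L.lie_mem hT hU)
      rwa [lie_T'_U', inv_smul_smul₀ (by norm_num)] at this
    have he1 : e1 ∈ L := lie_U'_e2 ▸ L.lie_mem hU he2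
    rw [g14, Submodule.span_le]
    rintro x (rfl | rfl | rfl | rfl | rfl) <;> assumption

lemma lie_K' (y : M3) :
    ⁅K', y⁆ = !![0, -y 0 1, y 0 2; y 1 0, 0, 2 * y 1 2; -y 2 0, -(2 * y 2 1), 0] := by
  ext i j
  fin_cases i <;> fin_cases j <;>
    simp [K', Ring.lie_def, Matrix.mul_apply, Matrix.vecMul, dotProduct, Fin.sum_univ_three] <;>
    ring

/- Lagrange interpolation: `(t² - 1)(t² - 4)/4` and `-t(t - 1)(t² - 4)/6`, evaluated at
`t = ad K'`, project onto the eigenvalues `0` and `-1`. -/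
lemma lie_K'_combination_eq_smul_K' {y : M3} (hy : y ∈ g14) :
    y - (5/4 : ℝ) • ⁅K', ⁅K', y⁆⁆ + (1/4 : ℝ) • ⁅K', ⁅K', ⁅K', ⁅K', y⁆⁆⁆⁆ = y 1 1 • K' := by
  obtain ⟨h00, -, -, h22⟩ := mem_g14_iff.1 hy
  simp only [lie_K']
  ext i j
  fin_cases i <;> fin_cases j <;> simp [K', h00, h22] <;> ring

lemma lie_K'_combination_eq_smul_e1 {y : M3} (hy : y ∈ g14) :
    (-1/6 : ℝ) • (⁅K', ⁅K', ⁅K', ⁅K', y⁆⁆⁆⁆ - ⁅K', ⁅K', ⁅K', y⁆⁆⁆ - (4 : ℝ) • ⁅K', ⁅K', y⁆⁆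
      + (4 : ℝ) • ⁅K', y⁆) = y 0 1 • e1 := by
  obtain ⟨-, h10, h20, -⟩ := mem_g14_iff.1 hy
  simp only [lie_K']
  ext i j
  fin_cases i <;> fin_cases j <;> simp [e1, h10, h20] <;> ring

lemma le_m14_of_inf_eq_bot {m' : Submodule ℝ M3} (hg : m' ≤ g14) (hinf : h14 ⊓ m' = ⊥)
    (hK : ∀ y ∈ m', ⁅K', y⁆ ∈ m') : m' ≤ m14 := by
  intro y hy
  have hy1 := hK _ hy
  have hy2 := hK _ hy1
  have hy3 := hK _ hy2
  have hy4 := hK _ hy3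
  have h11 : y 1 1 = 0 := by
    refine eq_zero_of_smul_mem_of_inf_eq_bot hinf K'_mem_h14 K'_ne_zero ?_
    rw [← lie_K'_combination_eq_smul_K' (hg hy)]
    exact m'.add_mem (m'.sub_mem hy (m'.smul_mem _ hy2)) (m'.smul_mem _ hy4)
  have h01 : y 0 1 = 0 := by
    refine eq_zero_of_smul_mem_of_inf_eq_bot hinf e1_mem_h14 e1_ne_zero ?_
    rw [← lie_K'_combination_eq_smul_e1 (hg hy)]
    exact m'.smul_mem _ (m'.add_mem (m'.sub_mem (m'.sub_mem hy4 hy3) (m'.smul_mem _ hy2))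
      (m'.smul_mem _ hy1))
  obtain ⟨h00, h10, h20, h22⟩ := mem_g14_iff.1 (hg hy)
  exact mem_m14_iff.2 ⟨h00, h01, h10, h11, h20, by rw [h22, h11, neg_zero]⟩

lemma eq_m14_of_reductive_complement {m' : Submodule ℝ M3} (hsup : h14 ⊔ m' = g14)
    (hinf : h14 ⊓ m' = ⊥) (hlie : ∀ x ∈ h14, ∀ y ∈ m', ⁅x, y⁆ ∈ m') : m' = m14 := by
  refine eq_of_le_of_inf_le_of_sup_le (z := h14)
    (le_m14_of_inf_eq_bot (hsup ▸ le_sup_right) hinf (hlie K' K'_mem_h14)) ?_ ?_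
  · rw [inf_comm, h14_inf_m14]
    exact bot_le
  · rw [sup_comm, h14_sup_m14, sup_comm, hsup]

/-- `h` is a 2-dimensional subalgebra of `g` containing no
nonzero ideal of `g`, `m = span{e₂, T', U'}` is a reductive complement of `h`
in `g` generating `g` as a Lie algebra, and `m` is the unique subspace with
`g = h ⊕ m` and `[h, m] ⊆ m`. -/
theorem stmt14 :
    Module.finrank ℝ h14 = 2 ∧
    (∀ x ∈ h14, ∀ y ∈ h14, ⁅x, y⁆ ∈ h14) ∧
    (∀ I : Submodule ℝ M3, I ≤ h14 → (∀ x ∈ g14, ∀ y ∈ I, ⁅x, y⁆ ∈ I) → I = ⊥) ∧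
    h14 ⊔ m14 = g14 ∧ h14 ⊓ m14 = ⊥ ∧
    (∀ x ∈ h14, ∀ y ∈ m14, ⁅x, y⁆ ∈ m14) ∧
    (LieSubalgebra.lieSpan ℝ M3 (m14 : Set M3)).toSubmodule = g14 ∧
    (∀ m' : Submodule ℝ M3, h14 ⊔ m' = g14 → h14 ⊓ m' = ⊥ →
      (∀ x ∈ h14, ∀ y ∈ m', ⁅x, y⁆ ∈ m') → m' = m14) := by
  refine ⟨finrank_h14, fun _ hx _ hy => lie_mem_h14 hx hy, ?_, h14_sup_m14, h14_inf_m14,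
    fun _ hx _ hy => lie_mem_m14_of_mem_h14 hx hy, lieSpan_m14,
    fun _ => eq_m14_of_reductive_complement⟩
  intro I hI hIdeal
  refine (Submodule.eq_bot_iff I).2 fun y hy => ?_
  exact eq_zero_of_mem_h14_of_lie_T'_mem_h14 (hI hy) (hI (hIdeal T' T'_mem_g14 y hy))

end Stmt14
end

section
/- Let g be the 6-dimensional real Lie algebra with basis e₁,…,e₆ and brackets [e₁,e₂]=e₆, [e₁,e₃]=e₅, [e₂,e₃]=e₄, [e₅,e₄]=−e₆, [e₂,e₆]=−e₁, [e₃,e₅]=−e₁, [e₂,e₄]=e₃, [e₃,e₄]=−e₂, [e₆,e₄]=e₅, and [e₁,e₄]=[e₁,e₅]=[e₁,e₆]=[e₂,e₅]=[e₃,e₆]=[e₅,e₆]=0. Each of the following pairs (h, m) satisfies g = h ⊕ m as vector spaces, [h, m] ⊆ m, and m generates g as a Lie algebra: (i) h = span{e₁,e₂,e₆} and m = span{e₅, e₃ − b₃e₁ − b₂e₆, e₄ + b₂e₁ + b₃e₆} for all b₂,b₃ ∈ ℝ; (ii) h = span{e₂,e₃,e₄} and m = span{e₁ + a·e₄, e₆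 − a·e₃, e₅ + a·e₂} for all a ∈ ℝ with a ≠ 0; (iii) h = span{e₄,e₅,e₆} and m = span{e₁, e₂ + b₁e₆ + b₂e₅, e₃ − b₂e₆ + b₁e₅} for all b₁,b₂ ∈ ℝ. -/
/-! Everything is a finite computation in the basis `e₁, …, e₆`. Since `dim 𝔤 = 6` and `𝔥`, `𝔪`
are each spanned by three vectors, `𝔥 ∩ 𝔪 = 0` follows from `𝔥 + 𝔪 = 𝔤` by counting dimensions,
and `[𝔥, 𝔪] ⊆ 𝔪` only has to be checked on the spanning vectors. That `𝔪` generates `𝔤` is seen by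
recovering every `eᵢ` from the generators of `𝔪` and their brackets. -/

open Module Submodule

section

variable {K V : Type*} [Field K] [AddCommGroup V] [Module K V]

theorem finrank_span_triple_le (a b c : V) : finrank K (span K {a, b, c}) ≤ 3 := by
  classical
  calc finrank K (span K {a, b, c}) ≤ ({a, b, c} : Set V).toFinset.card := finrank_span_le_card _
    _ ≤ 3 := by simpa using Finset.card_le_three

theorem Submodule.inf_eq_bot_of_sup_eq_top [FiniteDimensional K V] {p q : Submodule K V}
    (hsup : p ⊔ q = ⊤) (hdim : finrank K p + finrank K q ≤ finrank K V) : p ⊓ q = ⊥ := by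
  have := finrank_sup_add_finrank_inf_eq p q
  rw [hsup, finrank_top] at this
  exact Submodule.finrank_eq_zero.1 (by omega)

theorem Submodule.mem_span_triple_sup_span_triple {x a b c d e f : V} :
    x ∈ span K {a, b, c} ⊔ span K {d, e, f} ↔
      ∃ r s t u v w : K, r • a + s • b + t • c + (u • d + v • e + w • f) = x := by
  simp only [mem_sup, mem_span_triple]
  constructor
  · rintro ⟨_, ⟨r, s, t, rfl⟩, _, ⟨u, v, w, rfl⟩, rfl⟩
    exact ⟨r, s, t, u, v, w, rfl⟩
  · rintro ⟨r, s, t, u, v, w, rfl⟩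
    exact ⟨_, ⟨r, s, t, rfl⟩, _, ⟨u, v, w, rfl⟩, rfl⟩

end

section

variable {R L : Type*} [CommRing R] [LieRing L] [LieAlgebra R L]

theorem lie_mem_of_mem_span {S T : Set L} {p : Submodule R L}
    (h : ∀ x ∈ S, ∀ y ∈ T, ⁅x, y⁆ ∈ p) {x y : L} (hx : x ∈ span R S) (hy : y ∈ span R T) :
    ⁅x, y⁆ ∈ p := by
  have : map₂ (LieModule.toEnd R L L : L →ₗ[R] Module.End R L) (span R S) (span R T) ≤ p := by
    rw [map₂_span_span, span_le]
    rintro _ ⟨x, hx, y, hy, rfl⟩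
    exact h x hx y hy
  simpa using map₂_le.1 this x hx y hy

variable (R) in
def IsGeneratingReductiveDecomposition (S T : Set L) : Prop :=
  span R S ⊔ span R T = ⊤ ∧ span R S ⊓ span R T = ⊥ ∧
    (∀ x ∈ span R S, ∀ y ∈ span R T, ⁅x, y⁆ ∈ span R T) ∧
    (LieSubalgebra.lieSpan R L T).toSubmodule = ⊤

end

section

variable {K L : Type*} [Field K] [LieRing L] [LieAlgebra K L]

theorem IsGeneratingReductiveDecomposition.of_triples {h1 h2 h3 m1 m2 m3 : L}
    (hdim : finrank K L = 6) (hsup : span K {h1, h2, h3} ⊔ span K {m1, m2, m3} = ⊤)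
    (hlie : ∀ x ∈ ({h1, h2, h3} : Set L), ∀ y ∈ ({m1, m2, m3} : Set L),
      ⁅x, y⁆ ∈ span K {m1, m2, m3})
    (hgen : (LieSubalgebra.lieSpan K L {m1, m2, m3}).toSubmodule = ⊤) :
    IsGeneratingReductiveDecomposition K {h1, h2, h3} {m1, m2, m3} := by
  have : FiniteDimensional K L := Module.finite_of_finrank_pos (by omega)
  refine ⟨hsup, inf_eq_bot_of_sup_eq_top hsup ?_, fun x hx y hy ↦ lie_mem_of_mem_span hlie hx hy,
    hgen⟩
  linarith [finrank_span_triple_le (K := K) h1 h2 h3, finrank_span_triple_le (K := K) m1 m2 m3]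

variable (K) in
structure IsSl2SemidirectBasis (e1 e2 e3 e4 e5 e6 : L) : Prop where
  linearIndependent : LinearIndependent K ![e1, e2, e3, e4, e5, e6]
  span_eq_top : span K {e1, e2, e3, e4, e5, e6} = ⊤
  lie12 : ⁅e1, e2⁆ = e6
  lie13 : ⁅e1, e3⁆ = e5
  lie23 : ⁅e2, e3⁆ = e4
  lie54 : ⁅e5, e4⁆ = -e6
  lie26 : ⁅e2, e6⁆ = -e1
  lie35 : ⁅e3, e5⁆ = -e1
  lie24 : ⁅e2, e4⁆ = e3
  lie34 : ⁅e3, e4⁆ = -e2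
  lie64 : ⁅e6, e4⁆ = e5
  lie14 : ⁅e1, e4⁆ = 0
  lie15 : ⁅e1, e5⁆ = 0
  lie16 : ⁅e1, e6⁆ = 0
  lie25 : ⁅e2, e5⁆ = 0
  lie36 : ⁅e3, e6⁆ = 0
  lie56 : ⁅e5, e6⁆ = 0

namespace IsSl2SemidirectBasis

variable {e1 e2 e3 e4 e5 e6 : L}

theorem finrank_eq (he : IsSl2SemidirectBasis K e1 e2 e3 e4 e5 e6) : finrank K L = 6 := by
  have hrange : Set.range ![e1, e2, e3, e4, e5, e6] = {e1, e2, e3, e4, e5, e6} := by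
    simp only [Matrix.range_cons, Matrix.range_empty, Set.union_empty, Set.singleton_union]
  rw [← finrank_top, ← he.span_eq_top, ← hrange, finrank_span_eq_card he.linearIndependent,
    Fintype.card_fin]

theorem eq_top_of_mem (he : IsSl2SemidirectBasis K e1 e2 e3 e4 e5 e6) {p : Submodule K L}
    (h1 : e1 ∈ p) (h2 : e2 ∈ p) (h3 : e3 ∈ p) (h4 : e4 ∈ p) (h5 : e5 ∈ p) (h6 : e6 ∈ p) :
    p = ⊤ := by
  rw [eq_top_iff, ← he.span_eq_top, span_le]
  simp [Set.insert_subset_iff, *]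

theorem lie21 (he : IsSl2SemidirectBasis K e1 e2 e3 e4 e5 e6) : ⁅e2, e1⁆ = -e6 := by
  rw [← lie_skew, he.lie12]

theorem lie31 (he : IsSl2SemidirectBasis K e1 e2 e3 e4 e5 e6) : ⁅e3, e1⁆ = -e5 := by
  rw [← lie_skew, he.lie13]

theorem lie32 (he : IsSl2SemidirectBasis K e1 e2 e3 e4 e5 e6) : ⁅e3, e2⁆ = -e4 := by
  rw [← lie_skew, he.lie23]

theorem lie45 (he : IsSl2SemidirectBasis K e1 e2 e3 e4 e5 e6) : ⁅e4, e5⁆ = e6 := by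
  rw [← lie_skew, he.lie54, neg_neg]

theorem lie62 (he : IsSl2SemidirectBasis K e1 e2 e3 e4 e5 e6) : ⁅e6, e2⁆ = e1 := by
  rw [← lie_skew, he.lie26, neg_neg]

theorem lie53 (he : IsSl2SemidirectBasis K e1 e2 e3 e4 e5 e6) : ⁅e5, e3⁆ = e1 := by
  rw [← lie_skew, he.lie35, neg_neg]

theorem lie42 (he : IsSl2SemidirectBasis K e1 e2 e3 e4 e5 e6) : ⁅e4, e2⁆ = -e3 := by
  rw [← lie_skew, he.lie24]

theorem lie43 (he : IsSl2SemidirectBasis K e1 e2 e3 e4 e5 e6) : ⁅e4, e3⁆ = e2 := by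
  rw [← lie_skew, he.lie34, neg_neg]

theorem lie46 (he : IsSl2SemidirectBasis K e1 e2 e3 e4 e5 e6) : ⁅e4, e6⁆ = -e5 := by
  rw [← lie_skew, he.lie64]

theorem lie41 (he : IsSl2SemidirectBasis K e1 e2 e3 e4 e5 e6) : ⁅e4, e1⁆ = 0 := by
  rw [← lie_skew, he.lie14, neg_zero]

theorem lie51 (he : IsSl2SemidirectBasis K e1 e2 e3 e4 e5 e6) : ⁅e5, e1⁆ = 0 := by
  rw [← lie_skew, he.lie15, neg_zero]

theorem lie61 (he : IsSl2SemidirectBasis K e1 e2 e3 e4 e5 e6) : ⁅e6, e1⁆ = 0 := by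
  rw [← lie_skew, he.lie16, neg_zero]

theorem lie52 (he : IsSl2SemidirectBasis K e1 e2 e3 e4 e5 e6) : ⁅e5, e2⁆ = 0 := by
  rw [← lie_skew, he.lie25, neg_zero]

theorem lie63 (he : IsSl2SemidirectBasis K e1 e2 e3 e4 e5 e6) : ⁅e6, e3⁆ = 0 := by
  rw [← lie_skew, he.lie36, neg_zero]

theorem lie65 (he : IsSl2SemidirectBasis K e1 e2 e3 e4 e5 e6) : ⁅e6, e5⁆ = 0 := by
  rw [← lie_skew, he.lie56, neg_zero]

theorem isGeneratingReductiveDecomposition_126 (he : IsSl2SemidirectBasis K e1 e2 e3 e4 e5 e6)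
    (b2 b3 : K) :
    IsGeneratingReductiveDecomposition K {e1, e2, e6}
      {e5, e3 - b3 • e1 - b2 • e6, e4 + b2 • e1 + b3 • e6} := by
  refine .of_triples he.finrank_eq ?_ ?_ ?_
  · refine he.eq_top_of_mem ?_ ?_ ?_ ?_ ?_ ?_ <;> rw [mem_span_triple_sup_span_triple]
    · exact ⟨1, 0, 0, 0, 0, 0, by module⟩
    · exact ⟨0, 1, 0, 0, 0, 0, by module⟩
    · exact ⟨b3, 0, b2, 0, 1, 0, by module⟩
    · exact ⟨-b2, 0, -b3, 0, 0, 1, by module⟩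
    · exact ⟨0, 0, 0, 1, 0, 0, by module⟩
    · exact ⟨0, 0, 1, 0, 0, 0, by module⟩
  · rintro _ (rfl | rfl | rfl) _ (rfl | rfl | rfl) <;> rw [mem_span_triple]
    · exact ⟨0, 0, 0, by simp only [he.lie15]; module⟩
    · exact ⟨1, 0, 0, by simp only [lie_sub, lie_smul, lie_self, he.lie13, he.lie16]; module⟩
    · exact ⟨0, 0, 0, by simp only [lie_add, lie_smul, lie_self, he.lie14, he.lie16]; module⟩
    · exact ⟨0, 0, 0, by simp only [he.lie25]; module⟩
    · exact ⟨0, 0, 1, by simp only [lie_sub, lie_smul, he.lie23, he.lie21, he.lie26]; module⟩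
    · exact ⟨0, 1, 0, by simp only [lie_add, lie_smul, he.lie24, he.lie21, he.lie26]; module⟩
    · exact ⟨0, 0, 0, by simp only [he.lie65]; module⟩
    · exact ⟨0, 0, 0, by simp only [lie_sub, lie_smul, lie_self, he.lie63, he.lie61]; module⟩
    · exact ⟨1, 0, 0, by simp only [lie_add, lie_smul, lie_self, he.lie64, he.lie61]; module⟩
  · set H := LieSubalgebra.lieSpan K L {e5, e3 - b3 • e1 - b2 • e6, e4 + b2 • e1 + b3 • e6}
    have h5 : e5 ∈ H := LieSubalgebra.subset_lieSpan (by simp)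
    have hm2 : e3 - b3 • e1 - b2 • e6 ∈ H := LieSubalgebra.subset_lieSpan (by simp)
    have hm3 : e4 + b2 • e1 + b3 • e6 ∈ H := LieSubalgebra.subset_lieSpan (by simp)
    have h1 : e1 ∈ H := by
      convert H.lie_mem h5 hm2 using 1
      simp only [lie_sub, lie_smul, he.lie53, he.lie51, he.lie56]; module
    have h6 : e6 ∈ H := by
      convert neg_mem (H.lie_mem h5 hm3) using 1
      simp only [lie_add, lie_smul, he.lie54, he.lie51, he.lie56]; module
    have h3 : e3 ∈ H := by
      convert add_mem (add_mem hm2 (H.smul_mem b3 h1)) (H.smul_mem b2 h6) using 1; module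
    have h4 : e4 ∈ H := by
      convert sub_mem (sub_mem hm3 (H.smul_mem b2 h1)) (H.smul_mem b3 h6) using 1; module
    have h2 : e2 ∈ H := by
      convert neg_mem (H.lie_mem h3 h4) using 1
      rw [he.lie34, neg_neg]
    exact he.eq_top_of_mem h1 h2 h3 h4 h5 h6

theorem isGeneratingReductiveDecomposition_234 (he : IsSl2SemidirectBasis K e1 e2 e3 e4 e5 e6)
    {a : K} (ha : a ≠ 0) :
    IsGeneratingReductiveDecomposition K {e2, e3, e4}
      {e1 + a • e4, e6 - a • e3, e5 + a • e2} := by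
  refine .of_triples he.finrank_eq ?_ ?_ ?_
  · refine he.eq_top_of_mem ?_ ?_ ?_ ?_ ?_ ?_ <;> rw [mem_span_triple_sup_span_triple]
    · exact ⟨0, 0, -a, 1, 0, 0, by module⟩
    · exact ⟨1, 0, 0, 0, 0, 0, by module⟩
    · exact ⟨0, 1, 0, 0, 0, 0, by module⟩
    · exact ⟨0, 0, 1, 0, 0, 0, by module⟩
    · exact ⟨-a, 0, 0, 0, 0, 1, by module⟩
    · exact ⟨0, a, 0, 0, 1, 0, by module⟩
  · rintro _ (rfl | rfl | rfl) _ (rfl | rfl | rfl) <;> rw [mem_span_triple]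
    · exact ⟨0, -1, 0, by simp only [lie_add, lie_smul, he.lie21, he.lie24]; module⟩
    · exact ⟨-1, 0, 0, by simp only [lie_sub, lie_smul, he.lie26, he.lie23]; module⟩
    · exact ⟨0, 0, 0, by simp only [lie_add, lie_smul, lie_self, he.lie25]; module⟩
    · exact ⟨0, 0, -1, by simp only [lie_add, lie_smul, he.lie31, he.lie34]; module⟩
    · exact ⟨0, 0, 0, by simp only [lie_sub, lie_smul, lie_self, he.lie36]; module⟩
    · exact ⟨-1, 0, 0, by simp only [lie_add, lie_smul, he.lie35, he.lie32]; module⟩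
    · exact ⟨0, 0, 0, by simp only [lie_add, lie_smul, lie_self, he.lie41]; module⟩
    · exact ⟨0, 0, -1, by simp only [lie_sub, lie_smul, he.lie46, he.lie43]; module⟩
    · exact ⟨0, 1, 0, by simp only [lie_add, lie_smul, he.lie45, he.lie42]; module⟩
  · set H := LieSubalgebra.lieSpan K L {e1 + a • e4, e6 - a • e3, e5 + a • e2}
    have hm1 : e1 + a • e4 ∈ H := LieSubalgebra.subset_lieSpan (by simp)
    have hm2 : e6 - a • e3 ∈ H := LieSubalgebra.subset_lieSpan (by simp)
    have hm3 : e5 + a • e2 ∈ H := LieSubalgebra.subset_lieSpan (by simp)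
    have of_smul_mem : ∀ x, a • x ∈ H → x ∈ H := fun _ ↦ (H.toSubmodule.smul_mem_iff ha).1
    have h5 : e5 ∈ H := of_smul_mem _ <| by
      convert sub_mem (neg_mem (H.lie_mem hm1 hm2)) (H.smul_mem a hm3) using 1
      simp only [lie_sub, add_lie, lie_smul, smul_lie, he.lie16, he.lie46, he.lie13, he.lie43]
      module
    have h2 : e2 ∈ H := of_smul_mem _ <| by
      convert sub_mem hm3 h5 using 1; module
    have h6 : e6 ∈ H := of_smul_mem _ <| by
      convert sub_mem (H.lie_mem hm1 hm3) (H.smul_mem a hm2) using 1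
      simp only [lie_add, add_lie, lie_smul, smul_lie, he.lie15, he.lie45, he.lie12, he.lie42]
      module
    have h3 : e3 ∈ H := of_smul_mem _ <| by
      convert sub_mem h6 hm2 using 1; module
    have h1 : e1 ∈ H := of_smul_mem _ <| by
      convert sub_mem (H.lie_mem hm2 hm3) (H.smul_mem a hm1) using 1
      simp only [lie_add, sub_lie, lie_smul, smul_lie, he.lie65, he.lie35, he.lie62, he.lie32]
      module
    have h4 : e4 ∈ H := of_smul_mem _ <| by
      convert sub_mem hm1 h1 using 1; module
    exact he.eq_top_of_mem h1 h2 h3 h4 h5 h6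

theorem isGeneratingReductiveDecomposition_456 (he : IsSl2SemidirectBasis K e1 e2 e3 e4 e5 e6)
    (b1 b2 : K) :
    IsGeneratingReductiveDecomposition K {e4, e5, e6}
      {e1, e2 + b1 • e6 + b2 • e5, e3 - b2 • e6 + b1 • e5} := by
  refine .of_triples he.finrank_eq ?_ ?_ ?_
  · refine he.eq_top_of_mem ?_ ?_ ?_ ?_ ?_ ?_ <;> rw [mem_span_triple_sup_span_triple]
    · exact ⟨0, 0, 0, 1, 0, 0, by module⟩
    · exact ⟨0, -b2, -b1, 0, 1, 0, by module⟩
    · exact ⟨0, -b1, b2, 0, 0, 1, by module⟩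
    · exact ⟨1, 0, 0, 0, 0, 0, by module⟩
    · exact ⟨0, 1, 0, 0, 0, 0, by module⟩
    · exact ⟨0, 0, 1, 0, 0, 0, by module⟩
  · rintro _ (rfl | rfl | rfl) _ (rfl | rfl | rfl) <;> rw [mem_span_triple]
    · exact ⟨0, 0, 0, by simp only [he.lie41]; module⟩
    · exact ⟨0, 0, -1, by simp only [lie_add, lie_smul, he.lie42, he.lie46, he.lie45]; module⟩
    · exact ⟨0, 1, 0, by
        simp only [lie_add, lie_sub, lie_smul, he.lie43, he.lie46, he.lie45]; module⟩
    · exact ⟨0, 0, 0, by simp only [he.lie51]; module⟩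
    · exact ⟨0, 0, 0, by simp only [lie_add, lie_smul, lie_self, he.lie52, he.lie56]; module⟩
    · exact ⟨1, 0, 0, by
        simp only [lie_add, lie_sub, lie_smul, lie_self, he.lie53, he.lie56]; module⟩
    · exact ⟨0, 0, 0, by simp only [he.lie61]; module⟩
    · exact ⟨1, 0, 0, by simp only [lie_add, lie_smul, lie_self, he.lie62, he.lie65]; module⟩
    · exact ⟨0, 0, 0, by
        simp only [lie_add, lie_sub, lie_smul, lie_self, he.lie63, he.lie65]; module⟩
  · set H := LieSubalgebra.lieSpan K L {e1, e2 + b1 • e6 + b2 • e5, e3 - b2 • e6 + b1 • e5}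
    have h1 : e1 ∈ H := LieSubalgebra.subset_lieSpan (by simp)
    have hm2 : e2 + b1 • e6 + b2 • e5 ∈ H := LieSubalgebra.subset_lieSpan (by simp)
    have hm3 : e3 - b2 • e6 + b1 • e5 ∈ H := LieSubalgebra.subset_lieSpan (by simp)
    have h6 : e6 ∈ H := by
      convert H.lie_mem h1 hm2 using 1
      simp only [lie_add, lie_smul, he.lie12, he.lie16, he.lie15]; module
    have h5 : e5 ∈ H := by
      convert H.lie_mem h1 hm3 using 1
      simp only [lie_add, lie_sub, lie_smul, he.lie13, he.lie16, he.lie15]; module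
    have h2 : e2 ∈ H := by
      convert sub_mem (sub_mem hm2 (H.smul_mem b1 h6)) (H.smul_mem b2 h5) using 1; module
    have h3 : e3 ∈ H := by
      convert sub_mem (add_mem hm3 (H.smul_mem b2 h6)) (H.smul_mem b1 h5) using 1; module
    have h4 : e4 ∈ H := by
      convert H.lie_mem h2 h3 using 1
      rw [he.lie23]
    exact he.eq_top_of_mem h1 h2 h3 h4 h5 h6

end IsSl2SemidirectBasis

end

/-- in the 6-dimensional real Lie algebra `g ≅ sl₂(ℝ) ⋉ ℝ³` with
basis `e₁, …, e₆` and the given structure constants, each of the three listed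
pairs `(h, m)` satisfies `g = h ⊕ m`, `[h, m] ⊆ m`, and `m` generates `g` as a
Lie algebra. -/
theorem stmt16 (L : Type*) [LieRing L] [LieAlgebra ℝ L]
    (e1 e2 e3 e4 e5 e6 : L)
    (hindep : LinearIndependent ℝ ![e1, e2, e3, e4, e5, e6])
    (hspan : Submodule.span ℝ {e1, e2, e3, e4, e5, e6} = (⊤ : Submodule ℝ L))
    (h12 : ⁅e1, e2⁆ = e6) (h13 : ⁅e1, e3⁆ = e5) (h23 : ⁅e2, e3⁆ = e4)
    (h54 : ⁅e5, e4⁆ = -e6) (h26 : ⁅e2, e6⁆ = -e1) (h35 : ⁅e3, e5⁆ = -e1)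
    (h24 : ⁅e2, e4⁆ = e3) (h34 : ⁅e3, e4⁆ = -e2) (h64 : ⁅e6, e4⁆ = e5)
    (h14 : ⁅e1, e4⁆ = 0) (h15 : ⁅e1, e5⁆ = 0) (h16 : ⁅e1, e6⁆ = 0)
    (h25 : ⁅e2, e5⁆ = 0) (h36 : ⁅e3, e6⁆ = 0) (h56 : ⁅e5, e6⁆ = 0) :
    (∀ b2 b3 : ℝ,
      Submodule.span ℝ {e1, e2, e6} ⊔
        Submodule.span ℝ {e5, e3 - b3 • e1 - b2 • e6, e4 + b2 • e1 + b3 • e6}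
        = ⊤ ∧
      Submodule.span ℝ {e1, e2, e6} ⊓
        Submodule.span ℝ {e5, e3 - b3 • e1 - b2 • e6, e4 + b2 • e1 + b3 • e6}
        = ⊥ ∧
      (∀ x ∈ Submodule.span ℝ {e1, e2, e6},
        ∀ y ∈ Submodule.span ℝ
          {e5, e3 - b3 • e1 - b2 • e6, e4 + b2 • e1 + b3 • e6},
        ⁅x, y⁆ ∈ Submodule.span ℝ
          {e5, e3 - b3 • e1 - b2 • e6, e4 + b2 • e1 + b3 • e6}) ∧
      (LieSubalgebra.lieSpan ℝ L
        ({e5, e3 - b3 • e1 - b2 • e6, e4 + b2 • e1 + b3 • e6} : Set L)).toSubmodule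
        = ⊤) ∧
    (∀ a : ℝ, a ≠ 0 →
      Submodule.span ℝ {e2, e3, e4} ⊔
        Submodule.span ℝ {e1 + a • e4, e6 - a • e3, e5 + a • e2} = ⊤ ∧
      Submodule.span ℝ {e2, e3, e4} ⊓
        Submodule.span ℝ {e1 + a • e4, e6 - a • e3, e5 + a • e2} = ⊥ ∧
      (∀ x ∈ Submodule.span ℝ {e2, e3, e4},
        ∀ y ∈ Submodule.span ℝ {e1 + a • e4, e6 - a • e3, e5 + a • e2},
        ⁅x, y⁆ ∈ Submodule.span ℝ {e1 + a • e4, e6 - a • e3, e5 + a • e2}) ∧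
      (LieSubalgebra.lieSpan ℝ L
        ({e1 + a • e4, e6 - a • e3, e5 + a • e2} : Set L)).toSubmodule = ⊤) ∧
    (∀ b1 b2 : ℝ,
      Submodule.span ℝ {e4, e5, e6} ⊔
        Submodule.span ℝ
          {e1, e2 + b1 • e6 + b2 • e5, e3 - b2 • e6 + b1 • e5} = ⊤ ∧
      Submodule.span ℝ {e4, e5, e6} ⊓
        Submodule.span ℝ
          {e1, e2 + b1 • e6 + b2 • e5, e3 - b2 • e6 + b1 • e5} = ⊥ ∧
      (∀ x ∈ Submodule.span ℝ {e4, e5, e6},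
        ∀ y ∈ Submodule.span ℝ
          {e1, e2 + b1 • e6 + b2 • e5, e3 - b2 • e6 + b1 • e5},
        ⁅x, y⁆ ∈ Submodule.span ℝ
          {e1, e2 + b1 • e6 + b2 • e5, e3 - b2 • e6 + b1 • e5}) ∧
      (LieSubalgebra.lieSpan ℝ L
        ({e1, e2 + b1 • e6 + b2 • e5, e3 - b2 • e6 + b1 • e5} : Set L)).toSubmodule
        = ⊤) := by
  have he : IsSl2SemidirectBasis ℝ e1 e2 e3 e4 e5 e6 :=
    ⟨hindep, hspan, h12, h13, h23, h54, h26, h35, h24, h34, h64, h14, h15, h16, h25, h36, h56⟩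
  exact ⟨he.isGeneratingReductiveDecomposition_126, fun _ ha ↦
    he.isGeneratingReductiveDecomposition_234 ha, he.isGeneratingReductiveDecomposition_456⟩
end
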